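/- Lower semicontinuity of entropy under weak L¹ convergence: let μ be a probability measure, K ∈ ℝ, and (ρ_n)_{n≥1}, ρ nonnegative measurable functions with ∫ ρ_n dμ = 1 and ∫ ρ_n·log ρ_n dμ ≤ K for every n, such that ∫ ρ_n·g dμ → ∫ ρ·g dμ for every bounded measurable g (weak convergence in L¹(μ)). Then ∫ ρ·log ρ dμ ≤ K. -/

import Mathlib

/-!
By the Fenchel–Young inequality `x t ≤ x log x - x + eᵗ`, every bounded measurable `g`
satisfies `∫ ρₙ g ≤ K - 1 + ∫ eᵍ`, and this survives the weak limit. Testing it with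
`g = log ρ⁽ⁿ⁾`, where `ρ⁽ⁿ⁾` is `ρ` clamped to `[e⁻ⁿ, eⁿ]`, gives `∫ ρ log ρ⁽ⁿ⁾ ≤ K + e⁻ⁿ`;
the integrands are bounded below by `-1` and tend to `ρ log ρ`, so Fatou's lemma concludes.
-/

open MeasureTheory Filter Real Topology

theorem mul_le_mul_log_sub_add_exp {x : ℝ} (hx : 0 ≤ x) (t : ℝ) :
    x * t ≤ x * log x - x + exp t := by
  rcases hx.eq_or_lt with rfl | hx
  · simpa using (exp_pos t).le
  · have hexp : x * exp (t - log x) = exp t := by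
      rw [exp_sub, exp_log hx]; field_simp
    nlinarith [mul_le_mul_of_nonneg_left (add_one_le_exp (t - log x)) hx.le]

theorem tendsto_exp_neg_natCast : Tendsto (fun n : ℕ => exp (-n)) atTop (𝓝 0) :=
  tendsto_exp_neg_atTop_nhds_zero.comp tendsto_natCast_atTop_atTop

noncomputable def clampExp (n : ℕ) (x : ℝ) : ℝ := max (exp (-n)) (min x (exp n))

section clampExp

variable {n : ℕ} {x : ℝ}

theorem continuous_clampExp (n : ℕ) : Continuous (clampExp n) :=
  continuous_const.max (continuous_id.min continuous_const)

theorem Measurable.log_clampExp {α : Type*} [MeasurableSpace α] {f : α → ℝ}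
    (hf : Measurable f) (n : ℕ) : Measurable fun x => log (clampExp n (f x)) :=
  ((continuous_clampExp n).measurable.comp hf).log

theorem exp_neg_le_clampExp : exp (-n) ≤ clampExp n x := le_max_left _ _

theorem clampExp_pos : 0 < clampExp n x := (exp_pos _).trans_le exp_neg_le_clampExp

theorem clampExp_le_exp : clampExp n x ≤ exp n :=
  max_le (exp_le_exp.2 (by linarith [n.cast_nonneg (α := ℝ)])) (min_le_right _ _)

theorem abs_log_clampExp_le : |log (clampExp n x)| ≤ n := by
  refine abs_le.2 ⟨?_, ?_⟩
  · simpa using log_le_log (exp_pos _) (exp_neg_le_clampExp (x := x))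
  · simpa using log_le_log clampExp_pos (clampExp_le_exp (x := x))

theorem clampExp_le_add (hx : 0 ≤ x) : clampExp n x ≤ x + exp (-n) :=
  max_le (by linarith) ((min_le_left _ _).trans (by linarith [exp_pos (-(n : ℝ))]))

theorem tendsto_clampExp (hx : 0 ≤ x) : Tendsto (clampExp · x) atTop (𝓝 x) := by
  have hup : Tendsto (fun n : ℕ => min x (exp n)) atTop (𝓝 x) :=
    tendsto_const_nhds.congr' <|
      ((tendsto_exp_atTop.comp tendsto_natCast_atTop_atTop).eventually_ge_atTop x).mono
        fun _ hn => (min_eq_left hn).symm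
  simpa [clampExp, max_eq_right hx] using tendsto_exp_neg_natCast.max hup

theorem neg_one_le_mul_log_clampExp (hx : 0 ≤ x) : -1 ≤ x * log (clampExp n x) := by
  have hexp : 1 ≤ exp (n : ℝ) := one_le_exp n.cast_nonneg
  rcases le_total x 1 with hx1 | hx1
  · rcases hx.eq_or_lt with rfl | hx0
    · simp
    have hle : x ≤ clampExp n x := le_max_of_le_right (le_min le_rfl (hx1.trans hexp))
    calc -1 ≤ x - 1 := by linarith
      _ ≤ x * log x := self_sub_one_le_mul_log hx
      _ ≤ x * log (clampExp n x) := mul_le_mul_of_nonneg_left (log_le_log hx0 hle) hx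
  · have hle : 1 ≤ clampExp n x := le_max_of_le_right (le_min hx1 hexp)
    exact (mul_nonneg hx (log_nonneg hle)).trans' (by norm_num)

theorem tendsto_mul_log_clampExp (hx : 0 ≤ x) :
    Tendsto (fun n => x * log (clampExp n x)) atTop (𝓝 (x * log x)) := by
  rcases hx.eq_or_lt with rfl | hx0
  · simp
  · exact ((tendsto_clampExp hx).log hx0.ne').const_mul x

end clampExp

section Fatou

variable {α : Type*} [MeasurableSpace α] {μ : Measure α}
  {f : ℕ → α → ℝ} {F : α → ℝ} {a : ℕ → ℝ} {K : ℝ}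

theorem integrable_and_integral_le_of_tendsto_of_nonneg
    (hf : ∀ n, Integrable (f n) μ) (hf₀ : ∀ n, 0 ≤ᵐ[μ] f n)
    (hfF : ∀ᵐ x ∂μ, Tendsto (f · x) atTop (𝓝 (F x)))
    (hfa : ∀ n, ∫ x, f n x ∂μ ≤ a n) (ha : Tendsto a atTop (𝓝 K)) :
    Integrable F μ ∧ ∫ x, F x ∂μ ≤ K := by
  have hFm : AEStronglyMeasurable F μ :=
    aestronglyMeasurable_of_tendsto_ae _ (hf · |>.1) hfF
  have hF₀ : 0 ≤ᵐ[μ] F := by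
    filter_upwards [ae_all_iff.2 hf₀, hfF] with x hx hxF using ge_of_tendsto' hxF hx
  have hK : 0 ≤ K := ge_of_tendsto' ha fun n => (integral_nonneg_of_ae (hf₀ n)).trans (hfa n)
  have hlin : ∫⁻ x, ENNReal.ofReal (F x) ∂μ ≤ ENNReal.ofReal K :=
    calc ∫⁻ x, ENNReal.ofReal (F x) ∂μ
        = ∫⁻ x, liminf (fun n => ENNReal.ofReal (f n x)) atTop ∂μ := by
          refine lintegral_congr_ae ?_
          filter_upwards [hfF] with x hx
          exact ((ENNReal.continuous_ofReal.tendsto _).comp hx).liminf_eq.symm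
      _ ≤ liminf (fun n => ∫⁻ x, ENNReal.ofReal (f n x) ∂μ) atTop :=
          lintegral_liminf_le' fun n => (hf n).1.aemeasurable.ennreal_ofReal
      _ = liminf (fun n => ENNReal.ofReal (∫ x, f n x ∂μ)) atTop := by
          simp_rw [ofReal_integral_eq_lintegral_ofReal (hf _) (hf₀ _)]
      _ ≤ liminf (fun n => ENNReal.ofReal (a n)) atTop :=
          liminf_le_liminf (.of_forall fun n => ENNReal.ofReal_le_ofReal (hfa n))
      _ = ENNReal.ofReal K := ((ENNReal.continuous_ofReal.tendsto K).comp ha).liminf_eq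
  have hFint : Integrable F μ :=
    ⟨hFm, (hasFiniteIntegral_iff_ofReal hF₀).2 (hlin.trans_lt ENNReal.ofReal_lt_top)⟩
  refine ⟨hFint, ?_⟩
  rw [← ENNReal.ofReal_le_ofReal_iff hK, ofReal_integral_eq_lintegral_ofReal hFint hF₀]
  exact hlin

theorem integrable_and_integral_le_of_tendsto_of_bddBelow [IsFiniteMeasure μ] {C : ℝ}
    (hf : ∀ n, Integrable (f n) μ) (hfC : ∀ n, ∀ᵐ x ∂μ, -C ≤ f n x)
    (hfF : ∀ᵐ x ∂μ, Tendsto (f · x) atTop (𝓝 (F x)))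
    (hfa : ∀ n, ∫ x, f n x ∂μ ≤ a n) (ha : Tendsto a atTop (𝓝 K)) :
    Integrable F μ ∧ ∫ x, F x ∂μ ≤ K := by
  have hshift : ∀ {g : α → ℝ}, Integrable g μ →
      ∫ x, g x + C ∂μ = ∫ x, g x ∂μ + μ.real Set.univ * C := fun hg => by
    rw [integral_add hg (integrable_const C), integral_const, smul_eq_mul]
  obtain ⟨hFint, hFle⟩ := integrable_and_integral_le_of_tendsto_of_nonneg
    (f := fun n x => f n x + C) (F := fun x => F x + C)
    (a := fun n => a n + μ.real Set.univ * C)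
    (fun n => (hf n).add (integrable_const C))
    (fun n => (hfC n).mono fun x hx => by simp only [Pi.zero_apply]; linarith)
    (hfF.mono fun x hx => hx.add_const C)
    (fun n => by rw [hshift (hf n)]; linarith [hfa n]) (ha.add_const _)
  have hF : Integrable F μ :=
    (hFint.sub (integrable_const C)).congr (.of_forall fun x => add_sub_cancel_right (F x) C)
  exact ⟨hF, by linarith [hshift hF]⟩

end Fatou

theorem integral_mul_le_integral_mul_log_sub_add_integral_exp
    {α : Type*} [MeasurableSpace α] {μ : Measure α} [IsFiniteMeasure μ] {ρ g : α → ℝ} {C : ℝ}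
    (hρ : Integrable ρ μ) (hρ₀ : ∀ x, 0 ≤ ρ x)
    (hent : Integrable (fun x => ρ x * log (ρ x)) μ)
    (hg : AEStronglyMeasurable g μ) (hgC : ∀ x, |g x| ≤ C) :
    ∫ x, ρ x * g x ∂μ ≤ ∫ x, ρ x * log (ρ x) ∂μ - ∫ x, ρ x ∂μ + ∫ x, exp (g x) ∂μ := by
  have hexp : Integrable (fun x => exp (g x)) μ :=
    .of_bound (continuous_exp.comp_aestronglyMeasurable hg) (exp C) <| .of_forall fun x => by
      rw [norm_of_nonneg (exp_pos _).le]; exact exp_le_exp.2 (abs_le.1 (hgC x)).2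
  have hρg : Integrable (fun x => ρ x * g x) μ := hρ.mul_bdd hg (.of_forall hgC)
  have hdiff : Integrable (fun x => ρ x * log (ρ x) - ρ x) μ := hent.sub hρ
  calc ∫ x, ρ x * g x ∂μ ≤ ∫ x, ρ x * log (ρ x) - ρ x + exp (g x) ∂μ :=
        integral_mono hρg (hdiff.add hexp) fun x => mul_le_mul_log_sub_add_exp (hρ₀ x) _
    _ = _ := by rw [integral_add hdiff hexp, integral_sub hent hρ]

theorem integral_mul_log_clampExp_le {Ω : Type*} [MeasurableSpace Ω] {μ : Measure Ω}
    [IsProbabilityMeasure μ] {ρ : Ω → ℝ} {L : ℝ} (hρ : Integrable ρ μ) (hρ_meas : Measurable ρ)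
    (hρ₀ : ∀ ω, 0 ≤ ρ ω)
    (hdual : ∀ g : Ω → ℝ, Measurable g → ∀ C, (∀ ω, |g ω| ≤ C) →
      ∫ ω, ρ ω * g ω ∂μ ≤ L + ∫ ω, exp (g ω) ∂μ) (n : ℕ) :
    ∫ ω, ρ ω * log (clampExp n (ρ ω)) ∂μ ≤ L + ∫ ω, ρ ω ∂μ + exp (-n) :=
  calc ∫ ω, ρ ω * log (clampExp n (ρ ω)) ∂μ
      ≤ L + ∫ ω, clampExp n (ρ ω) ∂μ := by
        simpa only [exp_log clampExp_pos] using
          hdual _ (hρ_meas.log_clampExp n) n fun _ => abs_log_clampExp_le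
    _ ≤ L + ∫ ω, (ρ ω + exp (-n)) ∂μ :=
        (add_le_add_iff_left _).2 <|
          integral_mono_of_nonneg (.of_forall fun _ => clampExp_pos.le)
            (hρ.add (integrable_const _)) (.of_forall fun ω => clampExp_le_add (hρ₀ ω))
    _ = L + ∫ ω, ρ ω ∂μ + exp (-n) := by
        rw [integral_add hρ (integrable_const _), integral_const, probReal_univ, one_smul,
          add_assoc]

theorem entropy_lsc_of_weak_L1_convergence_general
    {Ω : Type*} [MeasurableSpace Ω] (μ : Measure Ω) [IsProbabilityMeasure μ]
    (K : ℝ) (ρseq : ℕ → Ω → ℝ) (ρ : Ω → ℝ)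
    (hnonneg : ∀ n ω, 0 ≤ ρseq n ω)
    (hone : ∀ n, ∫ ω, ρseq n ω ∂μ = 1)
    (hent : ∀ n, Integrable (fun ω => ρseq n ω * Real.log (ρseq n ω)) μ ∧
      ∫ ω, ρseq n ω * Real.log (ρseq n ω) ∂μ ≤ K)
    (hρ_meas : Measurable ρ) (hρ_nonneg : ∀ ω, 0 ≤ ρ ω)
    (hconv : ∀ g : Ω → ℝ, Measurable g → (∃ C, ∀ ω, |g ω| ≤ C) →
      Tendsto (fun n => ∫ ω, ρseq n ω * g ω ∂μ) atTop (nhds (∫ ω, ρ ω * g ω ∂μ))) :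
    Integrable (fun ω => ρ ω * Real.log (ρ ω)) μ ∧
      ∫ ω, ρ ω * Real.log (ρ ω) ∂μ ≤ K := by
  have hρseq_int : ∀ n, Integrable (ρseq n) μ :=
    fun n => .of_integral_ne_zero (by simp [hone n])
  have hρ_one : ∫ ω, ρ ω ∂μ = 1 :=
    tendsto_nhds_unique (by simpa using hconv 1 measurable_const ⟨1, by simp⟩)
      (by simp [hone])
  have hρ_int : Integrable ρ μ := .of_integral_ne_zero (by simp [hρ_one])
  have hdual : ∀ g : Ω → ℝ, Measurable g → ∀ C, (∀ ω, |g ω| ≤ C) →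
      ∫ ω, ρ ω * g ω ∂μ ≤ K - 1 + ∫ ω, exp (g ω) ∂μ := fun g hg C hC =>
    le_of_tendsto (hconv g hg ⟨C, hC⟩) <| .of_forall fun n => by
      linarith [(hent n).2, hone n, integral_mul_le_integral_mul_log_sub_add_integral_exp
        (hρseq_int n) (hnonneg n) (hent n).1 hg.aestronglyMeasurable hC]
  refine integrable_and_integral_le_of_tendsto_of_bddBelow (C := 1)
    (fun n => hρ_int.mul_bdd (hρ_meas.log_clampExp n).aestronglyMeasurable
      (.of_forall fun _ => abs_log_clampExp_le))
    (fun n => .of_forall fun ω => neg_one_le_mul_log_clampExp (hρ_nonneg ω))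
    (.of_forall fun ω => tendsto_mul_log_clampExp (hρ_nonneg ω))
    (fun n => ?_) (by simpa using tendsto_exp_neg_natCast.const_add K)
  linarith [integral_mul_log_clampExp_le hρ_int hρ_meas hρ_nonneg hdual n]

/-- Lower semicontinuity of entropy under weak `L¹` convergence: if `ρ_n ≥ 0`,
`μ(ρ_n) = 1`, `μ(ρ_n log ρ_n) ≤ K` for all `n`, and `μ(ρ_n g) → μ(ρ g)` for every
bounded measurable `g`, then `μ(ρ log ρ) ≤ K` (in particular `ρ log ρ` is
`μ`-integrable). -/
theorem entropy_lsc_of_weak_L1_convergence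
    {Ω : Type*} [MeasurableSpace Ω] (μ : Measure Ω) [IsProbabilityMeasure μ]
    (K : ℝ) (ρseq : ℕ → Ω → ℝ) (ρ : Ω → ℝ)
    (hmeas : ∀ n, Measurable (ρseq n)) (hnonneg : ∀ n ω, 0 ≤ ρseq n ω)
    (hone : ∀ n, ∫ ω, ρseq n ω ∂μ = 1)
    (hent : ∀ n, Integrable (fun ω => ρseq n ω * Real.log (ρseq n ω)) μ ∧
      ∫ ω, ρseq n ω * Real.log (ρseq n ω) ∂μ ≤ K)
    (hρ_meas : Measurable ρ) (hρ_nonneg : ∀ ω, 0 ≤ ρ ω)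
    (hconv : ∀ g : Ω → ℝ, Measurable g → (∃ C, ∀ ω, |g ω| ≤ C) →
      Tendsto (fun n => ∫ ω, ρseq n ω * g ω ∂μ) atTop (nhds (∫ ω, ρ ω * g ω ∂μ))) :
    Integrable (fun ω => ρ ω * Real.log (ρ ω)) μ ∧
      ∫ ω, ρ ω * Real.log (ρ ω) ∂μ ≤ K :=
  entropy_lsc_of_weak_L1_convergence_general μ K ρseq ρ hnonneg hone hent hρ_meas hρ_nonneg hconv
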